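/- Let N* : ℝ → [0,∞) be a Young function, q > 2 and κ ∈ {0,1}, and suppose N*(r·s) ≤ r^q·(N*(s) + 2κ) for all r ≥ 2 and s ≥ 0. Let N(s) := sup{ |s|·r − N*(r) : r ≥ 0 } be the conjugate of N*. Then for every ε ∈ (0, 2^{1−q}] and every s ∈ ℝ: N(ε·s) ≤ ε^{q/(q−1)}·N(s) + 2κ. (Scaling inequality established in the proof of the paper's Proposition 3.8, verification of condition (K)(i).) -/

import Mathlib

open Filter

/-- A Young function: continuous, convex, even, nonnegative, vanishing exactly at `0`,
with `N s / s → 0` as `s → 0⁺` and `N s / s → ∞` as `s → ∞`. -/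
def IsYoungFunction (N : ℝ → ℝ) : Prop :=
  Continuous N ∧ ConvexOn ℝ Set.univ N ∧ (∀ s, N (-s) = N s) ∧
  (∀ s, 0 ≤ N s) ∧ (∀ s, N s = 0 ↔ s = 0) ∧
  Tendsto (fun s => N s / s) (nhdsWithin 0 (Set.Ioi 0)) (nhds 0) ∧
  Tendsto (fun s => N s / s) atTop atTop

/-- The conjugate Young function `M†(s) := sup { |s|·r − M(r) : r ≥ 0 }`. -/
noncomputable def youngConj (M : ℝ → ℝ) (s : ℝ) : ℝ :=
  sSup {v : ℝ | ∃ r : ℝ, 0 ≤ r ∧ v = |s| * r - M r}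

/-!
Write `ε = λ^(q-1)`. Then `λ ≤ 1/2`, so the growth condition at `r = λ⁻¹` gives
`λ^q N*(t) ≤ N*(λ t) + 2κ`. Substituting `r = λ t` in the supremum defining `N(ε s)` yields
`|ε s| r - N*(r) ≤ λ^q (|s| t - N*(t)) + 2κ ≤ λ^q N(s) + 2κ`, and `λ^q = ε^(q/(q-1))`.
The last step needs `N(s)` to be a genuine supremum, which holds since `N*` is nonnegative
and superlinear.
-/

section YoungConj

variable {M : ℝ → ℝ}

lemma youngConj_bddAbove (hM : ∀ r, 0 ≤ M r) (hM_top : Tendsto (fun r => M r / r) atTop atTop)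
    (s : ℝ) : BddAbove {v : ℝ | ∃ r : ℝ, 0 ≤ r ∧ v = |s| * r - M r} := by
  obtain ⟨R, hR⟩ := eventually_atTop.1 (hM_top.eventually_ge_atTop |s|)
  refine ⟨|s| * max R 1, ?_⟩
  rintro v ⟨r, hr, rfl⟩
  rcases le_or_gt r (max R 1) with hle | hgt
  · nlinarith [abs_nonneg s, hM r]
  · have hr_pos : 0 < r := by linarith [le_max_right R 1]
    have hgrowth : |s| * r ≤ M r := by
      have := hR r ((le_max_left R 1).trans hgt.le)
      rwa [le_div_iff₀ hr_pos] at this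
    nlinarith [abs_nonneg s, le_max_right R 1]

lemma le_youngConj {s : ℝ} (hbdd : BddAbove {v : ℝ | ∃ r : ℝ, 0 ≤ r ∧ v = |s| * r - M r})
    {r : ℝ} (hr : 0 ≤ r) : |s| * r - M r ≤ youngConj M s :=
  le_csSup hbdd ⟨r, hr, rfl⟩

lemma youngConj_le {s C : ℝ} (h : ∀ r, 0 ≤ r → |s| * r - M r ≤ C) : youngConj M s ≤ C :=
  csSup_le ⟨_, 0, le_rfl, rfl⟩ (by rintro v ⟨r, hr, rfl⟩; exact h r hr)

lemma youngConj_mul_le {s a l C : ℝ}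
    (hbdd : BddAbove {v : ℝ | ∃ r : ℝ, 0 ≤ r ∧ v = |s| * r - M r})
    (ha : 0 ≤ a) (hl : 0 < l) (h : ∀ t, 0 ≤ t → a * M t ≤ M (l * t) + C) :
    youngConj M (a / l * s) ≤ a * youngConj M s + C := by
  refine youngConj_le fun r hr => ?_
  have ht : 0 ≤ r / l := div_nonneg hr hl.le
  have hscale := h (r / l) ht
  have hconj := mul_le_mul_of_nonneg_left (le_youngConj hbdd ht) ha
  rw [mul_div_cancel₀ r hl.ne'] at hscale
  have hrw : |a / l * s| * r = a * (|s| * (r / l)) := by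
    rw [abs_mul, abs_of_nonneg (div_nonneg ha hl.le)]
    ring
  rw [hrw]
  linarith

end YoungConj

theorem stmt10_general (Nstar : ℝ → ℝ) (hNs : IsYoungFunction Nstar)
    (q : ℝ) (hq : 2 < q) (κ : ℝ)
    (hΔ : ∀ r s : ℝ, 2 ≤ r → 0 ≤ s → Nstar (r * s) ≤ r ^ q * (Nstar s + 2 * κ)) :
    ∀ ε : ℝ, 0 < ε → ε ≤ (2 : ℝ) ^ (1 - q) → ∀ s : ℝ,
      youngConj Nstar (ε * s) ≤ ε ^ (q / (q - 1)) * youngConj Nstar s + 2 * κ := by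
  intro ε hε hε2 s
  have hq1 : 0 < q - 1 := by linarith
  obtain ⟨l, hl, rfl⟩ : ∃ l : ℝ, 0 < l ∧ ε = l ^ (q - 1) :=
    ⟨ε ^ (q - 1)⁻¹, by positivity, (Real.rpow_inv_rpow hε.le hq1.ne').symm⟩
  have hl_half : l ≤ 1 / 2 := by
    rwa [show (2 : ℝ) ^ (1 - q) = (1 / 2) ^ (q - 1) by
        rw [one_div, Real.inv_rpow (by norm_num), ← Real.rpow_neg (by norm_num), neg_sub],
      Real.rpow_le_rpow_iff hl.le (by norm_num) hq1] at hε2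
  have hreverse : ∀ t, 0 ≤ t → l ^ q * Nstar t ≤ Nstar (l * t) + 2 * κ := by
    intro t ht
    have h := hΔ l⁻¹ (l * t) (by rw [le_inv_comm₀ (by norm_num) hl]; linarith)
      (mul_nonneg hl.le ht)
    rw [inv_mul_cancel_left₀ hl.ne', Real.inv_rpow hl.le,
      ← div_eq_inv_mul, le_div_iff₀' (by positivity)] at h
    exact h
  have hε_eq : l ^ (q - 1) = l ^ q / l := Real.rpow_sub_one hl.ne' q
  have hexp : (l ^ (q - 1)) ^ (q / (q - 1)) = l ^ q := by
    rw [← Real.rpow_mul hl.le, mul_div_cancel₀ q hq1.ne']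
  rw [hexp, hε_eq]
  exact youngConj_mul_le (youngConj_bddAbove hNs.2.2.2.1 hNs.2.2.2.2.2.2 s) (by positivity) hl
    hreverse

/-- Scaling inequality from the proof of the paper's Proposition 3.8, condition (K)(i):
if `N*` satisfies `N*(r s) ≤ r^q (N*(s) + 2κ)` for `r ≥ 2, s ≥ 0`, then its conjugate
`N` satisfies `N(ε s) ≤ ε^{q/(q−1)} N(s) + 2κ` for all `ε ∈ (0, 2^{1−q}]`. -/
theorem stmt10 (Nstar : ℝ → ℝ) (hNs : IsYoungFunction Nstar)
    (q : ℝ) (hq : 2 < q) (κ : ℝ) (hκ : κ = 0 ∨ κ = 1)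
    (hΔ : ∀ r s : ℝ, 2 ≤ r → 0 ≤ s → Nstar (r * s) ≤ r ^ q * (Nstar s + 2 * κ)) :
    ∀ ε : ℝ, 0 < ε → ε ≤ (2 : ℝ) ^ (1 - q) → ∀ s : ℝ,
      youngConj Nstar (ε * s) ≤ ε ^ (q / (q - 1)) * youngConj Nstar s + 2 * κ :=
  stmt10_general Nstar hNs q hq κ hΔ
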